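/- Let q > 2, λ > 0, and let f : [0,∞) → ℝ be a twice continuously differentiable solution of the ODE f''(ξ) + λ|f'(ξ)|^q − (1/2)ξ f'(ξ) + ((q−2)/(2(q−1))) f(ξ) = 0 on [0,∞) with f(0) = −1 and f'(0) = 0, and define g(t) = e^{−t/(q−1)} f'(e^t). Then g(t) > 0 for every t ∈ ℝ, and there exists T ∈ ℝ such that for all t ≥ T one has g(t) < (1/(2λ))^{1/(q−1)} and g'(t) > −g(t)/(q−1). -/

import Mathlib

open Set Filter Topology Real

/-- `f` is a twice continuously differentiable solution, on the set `s`, of the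
self-similar profile ODE `f'' + λ|f'|^q - (1/2)ξ f' + ((q-2)/(2(q-1))) f = 0`
associated with the generalized deterministic KPZ equation. -/
def SolvesKPZProfile (q lam : ℝ) (s : Set ℝ) (f : ℝ → ℝ) : Prop :=
  ContDiffOn ℝ 2 f s ∧
  ∀ ξ ∈ s,
    derivWithin (derivWithin f s) s ξ + lam * |derivWithin f s ξ| ^ q
      - (1 / 2) * ξ * derivWithin f s ξ + ((q - 2) / (2 * (q - 1))) * f ξ = 0

/-- The function `g(t) = e^{-t/(q-1)} f'(e^t)`, i.e. the profile derivative in the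
variables `f'(ξ) = ξ^{1/(q-1)} g(t)`, `ξ = e^t`. -/
noncomputable def kpzG (q : ℝ) (f : ℝ → ℝ) : ℝ → ℝ :=
  fun t => Real.exp (-t / (q - 1)) * derivWithin f (Set.Ici 0) (Real.exp t)

/-! With `c = (q - 2) / (2 (q - 1))`, the equation at `ξ = 0` gives `f''(0) = -c f(0) > 0`. At a
first zero `ζ > 0` of `f''` the function `f'` is still positive, and differentiating the equation
gives `f'''(ζ) = (1/2 - c) f'(ζ) > 0`, which is impossible at a first zero reached from above.
Hence `f'` and `f''` are positive on `(0, ∞)`, so `g > 0`, `f` grows at least linearly and is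
eventually positive, and then the equation forces `λ f'(ξ)^(q-1) < ξ / 2`, i.e.
`g^(q-1) < 1 / (2λ)`. Finally `g' + g / (q - 1) = e^(t (q - 2) / (q - 1)) f''(e^t) > 0`. -/

theorem ContinuousOn.exists_first_zero {v : ℝ → ℝ} {a b : ℝ} (hab : a ≤ b)
    (hv : ContinuousOn v (Icc a b)) (ha : 0 < v a) (hb : v b ≤ 0) :
    ∃ ζ ∈ Ioc a b, v ζ = 0 ∧ ∀ x ∈ Ico a ζ, 0 < v x := by
  set K := Icc a b ∩ v ⁻¹' Iic 0
  have hK : IsClosed K := hv.preimage_isClosed_of_isClosed isClosed_Icc isClosed_Iic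
  have hKne : K.Nonempty := ⟨b, ⟨hab, le_rfl⟩, hb⟩
  have hKbdd : BddBelow K := ⟨a, fun x hx => hx.1.1⟩
  obtain ⟨⟨haζ, hζb⟩, hvζ⟩ := hK.csInf_mem hKne hKbdd
  have hpos : ∀ x ∈ Ico a (sInf K), 0 < v x := fun x hx => by
    by_contra! hvx
    exact (csInf_le hKbdd ⟨⟨hx.1, hx.2.le.trans hζb⟩, hvx⟩).not_gt hx.2
  have haζ' : a < sInf K := haζ.lt_of_ne fun h => (h ▸ ha).not_ge hvζ
  obtain ⟨y, hy, hvy⟩ : 0 ∈ v '' Icc a (sInf K) :=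
    intermediate_value_Icc' haζ (hv.mono (Icc_subset_Icc_right hζb)) ⟨hvζ, ha.le⟩
  obtain rfl : y = sInf K := hy.2.eq_of_not_lt fun hlt => (hpos y ⟨hy.1, hlt⟩).ne' hvy
  exact ⟨sInf K, ⟨haζ', hζb⟩, hvy, hpos⟩

theorem HasDerivAt.nonpos_of_eventually_nhdsLT_ge {v : ℝ → ℝ} {d ζ : ℝ}
    (hd : HasDerivAt v d ζ) (hv : ∀ᶠ x in 𝓝[<] ζ, v ζ ≤ v x) : d ≤ 0 := by
  have hslope : Tendsto (slope v ζ) (𝓝[<] ζ) (𝓝 d) :=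
    (hasDerivWithinAt_iff_tendsto_slope' self_notMem_Iio).mp hd.hasDerivWithinAt
  refine le_of_tendsto hslope ?_
  filter_upwards [hv, self_mem_nhdsWithin] with x hvx hx
  rw [slope_def_field]
  exact div_nonpos_of_nonneg_of_nonpos (sub_nonneg.mpr hvx) (sub_nonpos.mpr (le_of_lt hx))

theorem forall_pos_of_hasDerivAt_pos_at_zeros {u v : ℝ → ℝ}
    (hu : ∀ x ∈ Ici (0 : ℝ), HasDerivWithinAt u (v x) (Ici 0) x)
    (hv : ContinuousOn v (Ici 0)) (hu0 : u 0 = 0) (hv0 : 0 < v 0)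
    (hcross : ∀ ζ > 0, 0 < u ζ → v ζ = 0 → ∃ d > 0, HasDerivAt v d ζ) :
    ∀ x > 0, 0 < v x := by
  intro x hx
  by_contra! hvx
  obtain ⟨ζ, ⟨hζ, -⟩, hvζ, hpos⟩ :=
    (hv.mono Icc_subset_Ici_self).exists_first_zero hx.le hv0 hvx
  have hmono : StrictMonoOn u (Icc 0 ζ) := by
    refine strictMonoOn_of_hasDerivWithinAt_pos (f' := v) (convex_Icc 0 ζ)
      (fun y hy => (hu y hy.1).continuousWithinAt.mono Icc_subset_Ici_self)
      (fun y hy => ?_) (fun y hy => ?_)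
    all_goals rw [interior_Icc] at hy
    · exact ((hu y hy.1.le).hasDerivAt (Ici_mem_nhds hy.1)).hasDerivWithinAt
    · exact hpos y ⟨hy.1.le, hy.2⟩
  have huζ : 0 < u ζ := hu0 ▸ hmono ⟨le_rfl, hζ.le⟩ ⟨hζ.le, le_rfl⟩ hζ
  obtain ⟨d, hd, hvd⟩ := hcross ζ hζ huζ hvζ
  refine hd.not_ge (hvd.nonpos_of_eventually_nhdsLT_ge ?_)
  filter_upwards [Ico_mem_nhdsLT hζ] with y hy
  exact hvζ ▸ (hpos y hy).le

theorem tendsto_atTop_of_hasDerivWithinAt_ge {f f' : ℝ → ℝ} {a m : ℝ} (hm : 0 < m)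
    (hf : ∀ x ∈ Ici a, HasDerivWithinAt f (f' x) (Ici a) x) (hf' : ∀ x ∈ Ici a, m ≤ f' x) :
    Tendsto f atTop atTop := by
  have hmono : MonotoneOn (fun x => f x - m * x) (Ici a) := by
    refine monotoneOn_of_hasDerivWithinAt_nonneg (f' := fun x => f' x - m) (convex_Ici a)
      (fun x hx =>
        ((hf x hx).fun_sub ((hasDerivWithinAt_id x _).const_mul m)).continuousWithinAt)
      (fun x hx => ?_) (fun x hx => ?_)
    all_goals rw [interior_Ici] at hx
    · simpa using ((hf x (Ioi_subset_Ici_self hx)).fun_sub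
        ((hasDerivWithinAt_id x _).const_mul m)).mono Ioi_subset_Ici_self
    · exact sub_nonneg.mpr (hf' x (Ioi_subset_Ici_self hx))
  have hlin : Tendsto (fun x => f a - m * a + m * x) atTop atTop :=
    tendsto_atTop_add_const_left _ _ (tendsto_id.const_mul_atTop hm)
  refine tendsto_atTop_mono' _ ?_ hlin
  filter_upwards [eventually_ge_atTop a] with x hx
  have := hmono self_mem_Ici hx hx
  linarith

theorem exp_neg_div_mul_lt_rpow {p lam a t : ℝ} (hp : 0 < p) (hlam : 0 < lam) (ha : 0 ≤ a)
    (h : lam * a ^ p < exp t / 2) :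
    exp (-t / p) * a < (1 / (2 * lam)) ^ (1 / p) := by
  rw [one_div p, lt_rpow_inv_iff_of_pos (by positivity) (by positivity) hp,
    mul_rpow (exp_pos _).le ha, ← exp_mul, div_mul_cancel₀ _ hp.ne', exp_neg,
    lt_div_iff₀ (by positivity)]
  field_simp
  nlinarith [exp_pos t]

theorem hasDerivAt_exp_neg_div_mul_comp_exp {u : ℝ → ℝ} {u' p t : ℝ}
    (hu : HasDerivAt u u' (exp t)) :
    HasDerivAt (fun s => exp (-s / p) * u (exp s))
      (-(exp (-t / p) * u (exp t)) / p + exp (-t / p) * (u' * exp t)) t := by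
  have hexp : HasDerivAt (fun s => exp (-s / p)) (exp (-t / p) * (-1 / p)) t :=
    (((hasDerivAt_id t).neg).div_const p).exp.congr_deriv (by simp [neg_div])
  refine (hexp.mul (hu.comp t (hasDerivAt_exp t))).congr_deriv ?_
  simp only [Function.comp_apply]
  ring

namespace SolvesKPZProfile

variable {q lam : ℝ} {f : ℝ → ℝ}

theorem hasDerivWithinAt (hf : SolvesKPZProfile q lam (Ici 0) f) {x : ℝ} (hx : x ∈ Ici 0) :
    HasDerivWithinAt f (derivWithin f (Ici 0) x) (Ici 0) x :=
  (hf.1.differentiableOn two_ne_zero x hx).hasDerivWithinAt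

theorem hasDerivWithinAt_derivWithin (hf : SolvesKPZProfile q lam (Ici 0) f) {x : ℝ}
    (hx : x ∈ Ici 0) :
    HasDerivWithinAt (derivWithin f (Ici 0))
      (derivWithin (derivWithin f (Ici 0)) (Ici 0) x) (Ici 0) x :=
  ((hf.1.derivWithin (uniqueDiffOn_Ici 0) one_add_one_eq_two.le).differentiableOn one_ne_zero
    x hx).hasDerivWithinAt

theorem hasDerivAt_derivWithin (hf : SolvesKPZProfile q lam (Ici 0) f) {x : ℝ} (hx : 0 < x) :
    HasDerivAt (derivWithin f (Ici 0)) (derivWithin (derivWithin f (Ici 0)) (Ici 0) x) x :=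
  (hf.hasDerivWithinAt_derivWithin hx.le).hasDerivAt (Ici_mem_nhds hx)

theorem continuousOn_derivWithin_derivWithin (hf : SolvesKPZProfile q lam (Ici 0) f) :
    ContinuousOn (derivWithin (derivWithin f (Ici 0)) (Ici 0)) (Ici 0) :=
  (hf.1.derivWithin (uniqueDiffOn_Ici 0) one_add_one_eq_two.le).continuousOn_derivWithin
    (uniqueDiffOn_Ici 0) le_rfl

theorem derivWithin_derivWithin_eq (hf : SolvesKPZProfile q lam (Ici 0) f) {x : ℝ}
    (hx : x ∈ Ici 0) :
    derivWithin (derivWithin f (Ici 0)) (Ici 0) x = x / 2 * derivWithin f (Ici 0) x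
      - lam * |derivWithin f (Ici 0) x| ^ q - (q - 2) / (2 * (q - 1)) * f x := by
  linarith [hf.2 x hx]

theorem hasDerivAt_derivWithin_derivWithin_of_eq_zero (hf : SolvesKPZProfile q lam (Ici 0) f)
    (hq : q ≠ 1) {ζ : ℝ} (hζ : 0 < ζ) (hf' : 0 < derivWithin f (Ici 0) ζ)
    (hf'' : derivWithin (derivWithin f (Ici 0)) (Ici 0) ζ = 0) :
    HasDerivAt (derivWithin (derivWithin f (Ici 0)) (Ici 0))
      (derivWithin f (Ici 0) ζ / (2 * (q - 1))) ζ := by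
  set c := (q - 2) / (2 * (q - 1)) with hc
  have hF1 := hf.hasDerivAt_derivWithin hζ
  have hrhs := ((((hasDerivAt_id ζ).div_const 2).fun_mul hF1).fun_sub
    ((hF1.rpow_const (p := q) (Or.inl hf'.ne')).const_mul lam)).fun_sub
    (((hf.hasDerivWithinAt hζ.le).hasDerivAt (Ici_mem_nhds hζ)).const_mul c)
  have heq : derivWithin (derivWithin f (Ici 0)) (Ici 0) =ᶠ[𝓝 ζ]
      fun x => x / 2 * derivWithin f (Ici 0) x - lam * derivWithin f (Ici 0) x ^ q - c * f x := by
    filter_upwards [Ici_mem_nhds hζ, hF1.continuousAt.eventually (lt_mem_nhds hf')] with x hx hpos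
    rw [hf.derivWithin_derivWithin_eq hx, abs_of_pos hpos]
  refine (hrhs.congr_of_eventuallyEq heq).congr_deriv ?_
  simp only [hf'', id, hc]
  field_simp [sub_ne_zero.mpr hq]
  ring

theorem derivWithin_derivWithin_pos (hf : SolvesKPZProfile q lam (Ici 0) f) (hq : 2 < q)
    (hf0 : f 0 < 0) (hf'0 : derivWithin f (Ici 0) 0 = 0) {x : ℝ} (hx : 0 < x) :
    0 < derivWithin (derivWithin f (Ici 0)) (Ici 0) x := by
  have hq1 : 0 < q - 1 := by linarith
  have hf''0 : 0 < derivWithin (derivWithin f (Ici 0)) (Ici 0) 0 := by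
    rw [hf.derivWithin_derivWithin_eq self_mem_Ici, hf'0, abs_zero, zero_rpow (by positivity)]
    have : 0 < (q - 2) / (2 * (q - 1)) := by apply div_pos <;> linarith
    nlinarith
  refine forall_pos_of_hasDerivAt_pos_at_zeros (fun y hy => hf.hasDerivWithinAt_derivWithin hy)
    hf.continuousOn_derivWithin_derivWithin hf'0 hf''0 (fun ζ hζ hf' hf'' => ?_) x hx
  exact ⟨_, by positivity,
    hf.hasDerivAt_derivWithin_derivWithin_of_eq_zero (sub_ne_zero.mp hq1.ne') hζ hf' hf''⟩

theorem strictMonoOn_derivWithin (hf : SolvesKPZProfile q lam (Ici 0) f) (hq : 2 < q)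
    (hf0 : f 0 < 0) (hf'0 : derivWithin f (Ici 0) 0 = 0) :
    StrictMonoOn (derivWithin f (Ici 0)) (Ici 0) := by
  refine strictMonoOn_of_hasDerivWithinAt_pos
    (f' := derivWithin (derivWithin f (Ici 0)) (Ici 0)) (convex_Ici 0)
    (fun y hy => (hf.hasDerivWithinAt_derivWithin hy).continuousWithinAt) (fun y hy => ?_)
    (fun y hy => ?_)
  all_goals rw [interior_Ici] at hy
  · exact (hf.hasDerivAt_derivWithin hy).hasDerivWithinAt
  · exact hf.derivWithin_derivWithin_pos hq hf0 hf'0 hy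

theorem derivWithin_pos (hf : SolvesKPZProfile q lam (Ici 0) f) (hq : 2 < q)
    (hf0 : f 0 < 0) (hf'0 : derivWithin f (Ici 0) 0 = 0) {x : ℝ} (hx : 0 < x) :
    0 < derivWithin f (Ici 0) x :=
  hf'0.symm.trans_lt (hf.strictMonoOn_derivWithin hq hf0 hf'0 self_mem_Ici hx.le hx)

theorem tendsto_atTop (hf : SolvesKPZProfile q lam (Ici 0) f) (hq : 2 < q)
    (hf0 : f 0 < 0) (hf'0 : derivWithin f (Ici 0) 0 = 0) : Tendsto f atTop atTop := by
  refine tendsto_atTop_of_hasDerivWithinAt_ge (a := 1) (hf.derivWithin_pos hq hf0 hf'0 one_pos)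
    (fun x hx => (hf.hasDerivWithinAt (Ici_subset_Ici.mpr zero_le_one hx)).mono
      (Ici_subset_Ici.mpr zero_le_one))
    (fun x hx => ?_)
  exact (hf.strictMonoOn_derivWithin hq hf0 hf'0).monotoneOn (mem_Ici.mpr zero_le_one)
    (Ici_subset_Ici.mpr zero_le_one hx) hx

theorem lam_mul_derivWithin_rpow_lt (hf : SolvesKPZProfile q lam (Ici 0) f) (hq : 2 ≤ q)
    {ξ : ℝ} (hξ : 0 ≤ ξ) (hf'ξ : 0 < derivWithin f (Ici 0) ξ)
    (hf''ξ : 0 < derivWithin (derivWithin f (Ici 0)) (Ici 0) ξ) (hfξ : 0 ≤ f ξ) :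
    lam * derivWithin f (Ici 0) ξ ^ (q - 1) < ξ / 2 := by
  have hode := hf.derivWithin_derivWithin_eq hξ
  have hsplit : derivWithin f (Ici 0) ξ ^ q =
      derivWithin f (Ici 0) ξ ^ (q - 1) * derivWithin f (Ici 0) ξ := by
    rw [← rpow_add_one hf'ξ.ne', sub_add_cancel]
  rw [abs_of_pos hf'ξ, hsplit] at hode
  have hc : 0 ≤ (q - 2) / (2 * (q - 1)) * f ξ := by
    apply mul_nonneg (div_nonneg _ _) hfξ <;> linarith
  refine lt_of_mul_lt_mul_right ?_ hf'ξ.le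
  linarith

theorem hasDerivAt_kpzG (hf : SolvesKPZProfile q lam (Ici 0) f) (t : ℝ) :
    HasDerivAt (kpzG q f) (-kpzG q f t / (q - 1) + exp (-t / (q - 1)) *
      (derivWithin (derivWithin f (Ici 0)) (Ici 0) (exp t) * exp t)) t :=
  hasDerivAt_exp_neg_div_mul_comp_exp (hf.hasDerivAt_derivWithin (exp_pos t))

end SolvesKPZProfile

theorem kpz_g_pos_and_bounds (q lam : ℝ) (hq : 2 < q) (hlam : 0 < lam)
    (f : ℝ → ℝ)
    (hsol : SolvesKPZProfile q lam (Set.Ici 0) f)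
    (hf0 : f 0 = -1)
    (hf'0 : derivWithin f (Set.Ici 0) 0 = 0) :
    (∀ t : ℝ, 0 < kpzG q f t) ∧
    ∃ T : ℝ, ∀ t : ℝ, T ≤ t →
      kpzG q f t < (1 / (2 * lam)) ^ (1 / (q - 1)) ∧
      -(kpzG q f t) / (q - 1) < deriv (kpzG q f) t := by
  have hf0' : f 0 < 0 := by linarith
  have hf' := fun x (hx : 0 < x) => hsol.derivWithin_pos hq hf0' hf'0 hx
  have hf'' := fun x (hx : 0 < x) => hsol.derivWithin_derivWithin_pos hq hf0' hf'0 hx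
  refine ⟨fun t => mul_pos (exp_pos _) (hf' _ (exp_pos t)), ?_⟩
  refine eventually_atTop.mp ?_
  filter_upwards [tendsto_exp_atTop.eventually
    ((hsol.tendsto_atTop hq hf0' hf'0).eventually_ge_atTop 0)] with t hft
  have hξ := exp_pos t
  refine ⟨exp_neg_div_mul_lt_rpow (by linarith) hlam (hf' _ hξ).le
    (hsol.lam_mul_derivWithin_rpow_lt hq.le hξ.le (hf' _ hξ) (hf'' _ hξ) hft), ?_⟩
  rw [(hsol.hasDerivAt_kpzG t).deriv, lt_add_iff_pos_right]
  exact mul_pos (exp_pos _) (mul_pos (hf'' _ hξ) hξ)
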